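/- arXiv:2005.13908 — 3 statements merged into one kernel-verified Lean document; each statement's English description precedes it below -/
import Mathlib

section
/- Suppose X is a Markov random field on 𝒢 with strictly positive PMF p_X represented by clique potentials {ψ_C, C∈𝒞} such that for every vertex i∈V there is at most one clique whose potential may strictly depend on x_i; let C′:V→𝒞 assign to each i this clique (or an arbitrary clique containing i if no potential strictly depends on x_i), and let V_1,…,V_L be the equivalence classes of V under the relation i∼j iff C′(i)=C′(j), writing C′(V_ℓ) for the common value. Then the PMF of Y=(g_i(X_i), i∈V) satisfies Z·p_Y(y) = ∏_{C∈𝒞} U_C(y) for all y∈𝒴, where the functions U_C : 𝒴 → ℝ are well-defined by U_{C′(V_ℓ)}(g(x)) := Σ_{x′_{V_ℓ} ∈ g_{V_ℓ}^{-1}(g_{V_ℓ}(x_{V_ℓ}))} ψ_{C′(V_ℓ)}(x′_{V_ℓ}, x_{V∖V_ℓ}) for ℓ=1,…,L, and U_C(g(x)) := ψ_C(x) for every clique C not in the image of C′. -/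
open scoped Classical

/-!
Basic framework: tuples of finitely-valued random variables indexed by the
vertex set `Fin N`, joint PMFs as real-valued functions, pushforward
distributions, Shannon entropy, conditional entropy, marginals, and Markov
random fields on simple graphs.
-/

variable {N : ℕ}

/-- The distribution of the discrete random variable `f` when the underlying
configuration `x` is distributed according to the joint PMF `p`. -/
noncomputable def dist {𝒳 : Fin N → Type*} [∀ i, Fintype (𝒳 i)] {β : Type*}
    (p : (∀ i, 𝒳 i) → ℝ) (f : (∀ i, 𝒳 i) → β) : β → ℝ :=
  fun b => ∑ x : ∀ i, 𝒳 i, if f x = b then p x else 0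

/-- Shannon entropy `H(f)` of the random variable `f` under the joint PMF `p`. -/
noncomputable def ent {𝒳 : Fin N → Type*} [∀ i, Fintype (𝒳 i)] {β : Type*} [Fintype β]
    (p : (∀ i, 𝒳 i) → ℝ) (f : (∀ i, 𝒳 i) → β) : ℝ :=
  ∑ b : β, Real.negMulLog (dist p f b)

/-- Conditional Shannon entropy `H(f | h) := H(f, h) - H(h)`. -/
noncomputable def condEnt {𝒳 : Fin N → Type*} [∀ i, Fintype (𝒳 i)] {β γ : Type*}
    [Fintype β] [Fintype γ]
    (p : (∀ i, 𝒳 i) → ℝ) (f : (∀ i, 𝒳 i) → β) (h : (∀ i, 𝒳 i) → γ) : ℝ :=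
  ent p (fun x => (f x, h x)) - ent p h

/-- Restriction of a configuration to the coordinates in `A` (i.e. `x_A`). -/
def restr {𝒳 : Fin N → Type*} (A : Finset (Fin N)) (x : ∀ i, 𝒳 i) : ∀ i : A, 𝒳 i.1 :=
  fun i => x i.1

/-- The marginal PMF of the coordinates in `A`, evaluated at `x_A`. -/
noncomputable def margin {𝒳 : Fin N → Type*} [∀ i, Fintype (𝒳 i)]
    (p : (∀ i, 𝒳 i) → ℝ) (A : Finset (Fin N)) (x : ∀ i, 𝒳 i) : ℝ :=
  dist p (restr A) (restr A x)

/-- The neighbors `N_i` of vertex `i` in the graph `G`. -/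
noncomputable def nbr (G : SimpleGraph (Fin N)) (i : Fin N) : Finset (Fin N) :=
  Finset.univ.filter (fun j => G.Adj i j)

/-- `p` is (the joint PMF of) a Markov random field on `G`: for every vertex `i`,
the conditional PMF of `X_i` given `X_{V∖{i}}` equals the conditional PMF of `X_i`
given `X_{N_i}`, expressed in cross-multiplied form (conditional independence of
`X_i` and `X_{V∖({i}∪N_i)}` given `X_{N_i}`). -/
def IsMRF {𝒳 : Fin N → Type*} [∀ i, Fintype (𝒳 i)]
    (G : SimpleGraph (Fin N)) (p : (∀ i, 𝒳 i) → ℝ) : Prop :=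
  ∀ (i : Fin N) (x : ∀ j, 𝒳 j),
    p x * margin p (nbr G i) x
      = margin p (Finset.univ.erase i) x * margin p (insert i (nbr G i)) x

/-- Coordinate-wise application of the functions `g_i`: `g(x) = (g_i(x_i), i ∈ V)`. -/
def gmap {𝒳 𝒴 : Fin N → Type*} (g : ∀ i, 𝒳 i → 𝒴 i) (x : ∀ i, 𝒳 i) : ∀ i, 𝒴 i :=
  fun i => g i (x i)

/-- The set `𝒞` of cliques of `G`: subsets all of whose two-element subsets are
edges (this includes all singletons). -/
noncomputable def cliques (G : SimpleGraph (Fin N)) : Finset (Finset (Fin N)) :=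
  Finset.univ.filter (fun C => G.IsClique (C : Set (Fin N)))

/-- `ψ` (a potential defined on all of `𝒳`) depends only on the coordinates in `C`. -/
def localTo {𝒳 : Fin N → Type*} (C : Finset (Fin N)) (ψ : (∀ i, 𝒳 i) → ℝ) : Prop :=
  ∀ x x' : ∀ i, 𝒳 i, (∀ i ∈ C, x i = x' i) → ψ x = ψ x'

/-- The potential `ψ` depends on the coordinate `x_i` only via `y_i = g_i(x_i)`:
changing `x_i` within a preimage `g_i⁻¹(y_i)` does not change the value of `ψ`.
The negation of this is "`ψ` strictly depends on `x_i`". -/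
def onlyVia {𝒳 𝒴 : Fin N → Type*} (g : ∀ i, 𝒳 i → 𝒴 i) (i : Fin N)
    (ψ : (∀ j, 𝒳 j) → ℝ) : Prop :=
  ∀ (x : ∀ j, 𝒳 j) (xi' : 𝒳 i), g i xi' = g i (x i) →
    ψ (Function.update x i xi') = ψ x

/-!
Since `Z p_X = ∏_C ψ_C`, the quantity `Z p_Y(y)` is the sum of `∏_C ψ_C` over the fibre
`g⁻¹(y)`. By hypothesis, `ψ_C` depends on the coordinates outside the class `C'⁻¹(C)` only through
`g`, so on the fibre it is a function of `x_{C'⁻¹(C)}` alone. The fibre is the product of the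
blocks `g_{C'⁻¹(C)}⁻¹(y_{C'⁻¹(C)})`, so the sum of the product is the product of the blockwise sums
`U_C(y)`; for a clique outside the range of `C'` the block is empty and `U_C(y) = ψ_C(x)`.
-/

open Finset

section OnlyViaOff

variable {ι : Type*} {X Y : ι → Type*} {g : ∀ i, X i → Y i} {A B : Set ι} {M : Type*}

def OnlyViaOff (g : ∀ i, X i → Y i) (A : Set ι) (f : (∀ i, X i) → M) : Prop :=
  ∀ x x' : ∀ i, X i, (∀ j ∈ A, x j = x' j) → (∀ j ∉ A, g j (x j) = g j (x' j)) → f x = f x'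

theorem OnlyViaOff.mono {f : (∀ i, X i) → M} (hf : OnlyViaOff g A f) (hAB : A ⊆ B) :
    OnlyViaOff g B f := by
  intro x x' hB hg
  refine hf x x' (fun j hj => hB j (hAB hj)) fun j hj => ?_
  by_cases hjB : j ∈ B
  · rw [hB j hjB]
  · exact hg j hjB

theorem OnlyViaOff.finsetProd [CommMonoid M] {κ : Type*} {S : Finset κ} {f : κ → (∀ i, X i) → M}
    (hf : ∀ k ∈ S, OnlyViaOff g A (f k)) : OnlyViaOff g A fun x => ∏ k ∈ S, f k x :=
  fun x x' hA hg => prod_congr rfl fun k hk => hf k hk x x' hA hg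

end OnlyViaOff

section LumpFiber

variable {ι : Type*} [Fintype ι] [DecidableEq ι] {X Y : ι → Type*} [∀ i, Fintype (X i)]
  {g : ∀ i, X i → Y i} {A B : Set ι} {M : Type*} [CommSemiring M]

/-- For `A = V_ℓ` this is `g_{V_ℓ}⁻¹(g_{V_ℓ}(x₀_{V_ℓ})) × {x₀_{V∖V_ℓ}}`. -/
noncomputable def lumpFiber (g : ∀ i, X i → Y i) (A : Set ι) (x₀ : ∀ i, X i) :
    Finset (∀ i, X i) :=
  univ.filter fun z => (∀ j ∈ A, g j (z j) = g j (x₀ j)) ∧ ∀ j ∉ A, z j = x₀ j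

theorem mem_lumpFiber {x₀ z : ∀ i, X i} :
    z ∈ lumpFiber g A x₀ ↔ (∀ j ∈ A, g j (z j) = g j (x₀ j)) ∧ ∀ j ∉ A, z j = x₀ j := by
  simp [lumpFiber]

theorem lumpFiber_empty (x₀ : ∀ i, X i) : lumpFiber g ∅ x₀ = {x₀} := by
  ext z
  simp [mem_lumpFiber, funext_iff]

theorem piecewise_mem_lumpFiber {x₀ x₁ z : ∀ i, X i} (hz : z ∈ lumpFiber g A x₀)
    (h : ∀ j, g j (x₀ j) = g j (x₁ j)) : A.piecewise z x₁ ∈ lumpFiber g A x₁ := by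
  rw [mem_lumpFiber] at hz ⊢
  exact ⟨fun j hj => by rw [Set.piecewise_eq_of_mem _ _ _ hj, hz.1 j hj, h],
    fun j hj => Set.piecewise_eq_of_notMem _ _ _ hj⟩

theorem sum_lumpFiber_congr {f : (∀ i, X i) → M} (hf : OnlyViaOff g A f) {x₀ x₁ : ∀ i, X i}
    (h : ∀ j, g j (x₀ j) = g j (x₁ j)) :
    ∑ z ∈ lumpFiber g A x₀, f z = ∑ z ∈ lumpFiber g A x₁, f z := by
  refine sum_nbij' (fun z => A.piecewise z x₁) (fun z => A.piecewise z x₀)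
    (fun z hz => piecewise_mem_lumpFiber hz h)
    (fun z hz => piecewise_mem_lumpFiber hz fun j => (h j).symm) ?_ ?_ ?_
  all_goals intro z hz
  all_goals simp only [mem_lumpFiber] at hz
  · ext j
    by_cases hj : j ∈ A <;> simp [hj, (hz.2 j _).symm]
  · ext j
    by_cases hj : j ∈ A <;> simp [hj, (hz.2 j _).symm]
  · refine hf _ _ (fun j hj => ?_) fun j hj => ?_
    · rw [Set.piecewise_eq_of_mem _ _ _ hj]
    · rw [Set.piecewise_eq_of_notMem _ _ _ hj, hz.2 j hj, h]

theorem sum_lumpFiber_union_mul {f h : (∀ i, X i) → M} (hAB : Disjoint A B)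
    (hf : OnlyViaOff g A f) (hh : OnlyViaOff g B h) (x₀ : ∀ i, X i) :
    ∑ x ∈ lumpFiber g (A ∪ B) x₀, f x * h x
      = (∑ x ∈ lumpFiber g A x₀, f x) * ∑ x ∈ lumpFiber g B x₀, h x := by
  rw [sum_mul_sum, ← sum_product']
  refine sum_nbij' (fun x => (A.piecewise x x₀, B.piecewise x x₀))
    (fun uv => A.piecewise uv.1 uv.2) ?_ ?_ ?_ ?_ ?_
  · intro x hx
    simp only [mem_product, mem_lumpFiber, Set.mem_union, not_or] at hx ⊢
    grind [Set.piecewise]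
  · intro uv huv
    simp only [mem_product, mem_lumpFiber, Set.mem_union, not_or] at huv ⊢
    grind [Set.piecewise]
  · intro x hx
    simp only [mem_lumpFiber, Set.mem_union, not_or] at hx
    ext j
    by_cases hA : j ∈ A
    · simp [hA]
    by_cases hB : j ∈ B
    · simp [hA, hB]
    · simp [hA, hB, hx.2 j ⟨hA, hB⟩]
  · rintro ⟨u, v⟩ huv
    simp only [mem_product, mem_lumpFiber] at huv
    ext j
    · by_cases hA : j ∈ A
      · simp [hA]
      · simp [hA, huv.1.2 j hA]
    · by_cases hB : j ∈ B
      · simp [hB, Set.disjoint_right.mp hAB hB]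
      · simp [hB, huv.2.2 j hB]
  · intro x hx
    simp only [mem_lumpFiber, Set.mem_union, not_or] at hx
    refine congrArg₂ (· * ·) (hf _ _ (fun j hj => by simp [hj]) fun j hj => ?_)
      (hh _ _ (fun j hj => by simp [hj]) fun j hj => ?_)
    · by_cases hB : j ∈ B
      · simpa [hj] using hx.1 j (Or.inr hB)
      · simp [hj, hx.2 j ⟨hj, hB⟩]
    · by_cases hA : j ∈ A
      · simpa [hj] using hx.1 j (Or.inl hA)
      · simp [hj, hx.2 j ⟨hA, hj⟩]

theorem sum_lumpFiber_preimage_prod {κ : Type*} [DecidableEq κ] (σ : ι → κ) (S : Finset κ)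
    (f : κ → (∀ i, X i) → M) (hf : ∀ k ∈ S, OnlyViaOff g (σ ⁻¹' {k}) (f k)) (x₀ : ∀ i, X i) :
    ∑ x ∈ lumpFiber g (σ ⁻¹' S) x₀, ∏ k ∈ S, f k x
      = ∏ k ∈ S, ∑ x ∈ lumpFiber g (σ ⁻¹' {k}) x₀, f k x := by
  induction S using Finset.induction_on with
  | empty => simp [lumpFiber_empty]
  | @insert k S hk ih =>
    have hdisj : Disjoint (σ ⁻¹' {k}) (σ ⁻¹' S) :=
      (Set.disjoint_singleton_left.mpr hk).preimage σ
    have hS : OnlyViaOff g (σ ⁻¹' S) fun x => ∏ k ∈ S, f k x :=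
      OnlyViaOff.finsetProd fun l hl => (hf l (mem_insert_of_mem hl)).mono
        (Set.preimage_mono (Set.singleton_subset_iff.mpr hl))
    rw [coe_insert, Set.insert_eq, Set.preimage_union, prod_insert hk]
    simp_rw [prod_insert hk]
    rw [sum_lumpFiber_union_mul hdisj (hf k (mem_insert_self k S)) hS,
      ih fun l hl => hf l (mem_insert_of_mem hl)]

end LumpFiber

section Lumping

variable {𝒳 𝒴 : Fin N → Type*} {g : ∀ i, 𝒳 i → 𝒴 i} {f : (∀ i, 𝒳 i) → ℝ}

theorem eq_of_onlyVia {S : Finset (Fin N)} (hf : ∀ j ∈ S, onlyVia g j f) {x x' : ∀ i, 𝒳 i}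
    (hout : ∀ j ∉ S, x j = x' j) (hg : ∀ j ∈ S, g j (x j) = g j (x' j)) : f x = f x' := by
  induction S using Finset.induction_on generalizing x with
  | empty => exact congrArg f (funext fun j => hout j (notMem_empty j))
  | @insert a S ha ih =>
    rw [← hf a (mem_insert_self a S) x (x' a) (hg a (mem_insert_self a S)).symm]
    refine ih (fun j hj => hf j (mem_insert_of_mem hj)) (fun j hj => ?_) fun j hj => ?_
    · by_cases hja : j = a
      · subst hja
        simp
      · rw [Function.update_of_ne hja]
        exact hout j (by simp [hja, hj])
    · rw [Function.update_of_ne (ne_of_mem_of_not_mem hj ha)]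
      exact hg j (mem_insert_of_mem hj)

theorem onlyViaOff_of_onlyVia {A : Set (Fin N)} (hf : ∀ j ∉ A, onlyVia g j f) :
    OnlyViaOff g A f := fun x x' hA hg =>
  eq_of_onlyVia (S := univ.filter (· ∉ A)) (by simpa using hf)
    (fun j hj => hA j (by simpa using hj)) fun j hj => hg j (by simpa using hj)

theorem dist_gmap_eq_sum_lumpFiber [∀ i, Fintype (𝒳 i)] (p : (∀ i, 𝒳 i) → ℝ) {x₀ : ∀ i, 𝒳 i}
    {y : ∀ i, 𝒴 i} (hy : gmap g x₀ = y) :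
    dist p (gmap g) y = ∑ x ∈ lumpFiber g Set.univ x₀, p x := by
  rw [_root_.dist, lumpFiber, sum_filter]
  simp [← hy, gmap, funext_iff]

end Lumping

theorem lumped_factorization_general {𝒳 𝒴 : Fin N → Type*}
    [∀ i, Fintype (𝒳 i)]
    (G : SimpleGraph (Fin N)) (p : (∀ i, 𝒳 i) → ℝ)
    (hpos : ∀ x, 0 < p x)
    (ψ : Finset (Fin N) → (∀ i, 𝒳 i) → ℝ)
    (hfac : ∀ x : ∀ i, 𝒳 i,
      p x = (∏ C ∈ cliques G, ψ C x) / ∑ x' : ∀ i, 𝒳 i, ∏ C ∈ cliques G, ψ C x')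
    (g : ∀ i, 𝒳 i → 𝒴 i) (hsurj : ∀ i, Function.Surjective (g i))
    (C' : Fin N → Finset (Fin N))
    (hC'cl : ∀ i, C' i ∈ cliques G)
    (hC'only : ∀ i : Fin N, ∀ C ∈ cliques G, C ≠ C' i → onlyVia g i (ψ C)) :
    ∃ U : Finset (Fin N) → (∀ i, 𝒴 i) → ℝ,
      (∀ (i : Fin N) (x : ∀ j, 𝒳 j),
        U (C' i) (gmap g x)
          = ∑ z : ∀ j, 𝒳 j,
              if (∀ j, C' j = C' i → g j (z j) = g j (x j))
                  ∧ (∀ j, C' j ≠ C' i → z j = x j)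
              then ψ (C' i) z else 0)
      ∧ (∀ C ∈ cliques G, C ∉ Set.range C' →
          ∀ x : ∀ j, 𝒳 j, U C (gmap g x) = ψ C x)
      ∧ (∀ y : ∀ i, 𝒴 i,
          (∑ x' : ∀ i, 𝒳 i, ∏ C ∈ cliques G, ψ C x') * dist p (gmap g) y
            = ∏ C ∈ cliques G, U C y) := by
  have hψ : ∀ C ∈ cliques G, OnlyViaOff g (C' ⁻¹' {C}) (ψ C) := fun C hC =>
    onlyViaOff_of_onlyVia fun j hj => hC'only j C hC (Ne.symm hj)
  let sec : (∀ i, 𝒴 i) → ∀ i, 𝒳 i := fun y i => Function.surjInv (hsurj i) (y i)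
  have hsec : ∀ y, gmap g (sec y) = y := fun y => funext fun i => Function.surjInv_eq (hsurj i) _
  have hwelldef : ∀ C ∈ cliques G, ∀ x, ∑ z ∈ lumpFiber g (C' ⁻¹' {C}) (sec (gmap g x)), ψ C z
      = ∑ z ∈ lumpFiber g (C' ⁻¹' {C}) x, ψ C z := fun C hC x =>
    sum_lumpFiber_congr (hψ C hC) fun j => congrFun (hsec (gmap g x)) j
  refine ⟨fun C y => ∑ z ∈ lumpFiber g (C' ⁻¹' {C}) (sec y), ψ C z,
    fun i x => (hwelldef _ (hC'cl i) x).trans ?_, fun C hC hCR x => (hwelldef C hC x).trans ?_,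
    fun y => ?_⟩
  · rw [lumpFiber, sum_filter]
    congr! 2
  · rw [Set.preimage_singleton_eq_empty.mpr hCR, lumpFiber_empty, sum_singleton]
  · have hZ : ∑ x', ∏ C ∈ cliques G, ψ C x' ≠ 0 := fun hZ =>
      (hpos (sec y)).ne' (by rw [hfac, hZ, div_zero])
    have hcover : C' ⁻¹' (cliques G) = Set.univ := Set.eq_univ_of_forall hC'cl
    rw [dist_gmap_eq_sum_lumpFiber p (hsec y), mul_sum, ← hcover,
      ← sum_lumpFiber_preimage_prod C' _ ψ hψ]
    exact sum_congr rfl fun x _ => by rw [hfac x, mul_div_cancel₀ _ hZ]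

/-- **Proposition 1, factorization part.** Suppose the strictly
positive PMF `p_X` is represented by clique potentials such that for every vertex
`i` at most one clique potential may strictly depend on `x_i`, and `C'` assigns to
each `i` this clique (a clique containing `i`, such that every other clique
potential depends on `x_i` only via `y_i`). With the equivalence classes of
`i ∼ j ↔ C'(i) = C'(j)`, the PMF of `Y` satisfies
`Z · p_Y(y) = ∏_{C ∈ 𝒞} U_C(y)` for well-defined potentials `U_C`, where
`U_{C'(V_ℓ)}(g(x)) = ∑_{x'_{V_ℓ} ∈ g_{V_ℓ}⁻¹(g_{V_ℓ}(x_{V_ℓ}))} ψ_{C'(V_ℓ)}(x'_{V_ℓ}, x_{V∖V_ℓ})`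
(the sum below ranges over configurations `z` agreeing with `x` outside the class
of `i` and with `g_{V_ℓ}(z_{V_ℓ}) = g_{V_ℓ}(x_{V_ℓ})` on the class of `i`), and
`U_C(g(x)) = ψ_C(x)` for every clique `C` not in the image of `C'`. -/
theorem lumped_factorization {𝒳 𝒴 : Fin N → Type*}
    [∀ i, Fintype (𝒳 i)] [∀ i, Fintype (𝒴 i)]
    (G : SimpleGraph (Fin N)) (p : (∀ i, 𝒳 i) → ℝ)
    (hpos : ∀ x, 0 < p x) (hsum : ∑ x : ∀ i, 𝒳 i, p x = 1)
    (ψ : Finset (Fin N) → (∀ i, 𝒳 i) → ℝ)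
    (hloc : ∀ C ∈ cliques G, localTo C (ψ C))
    (hfac : ∀ x : ∀ i, 𝒳 i,
      p x = (∏ C ∈ cliques G, ψ C x) / ∑ x' : ∀ i, 𝒳 i, ∏ C ∈ cliques G, ψ C x')
    (g : ∀ i, 𝒳 i → 𝒴 i) (hsurj : ∀ i, Function.Surjective (g i))
    (C' : Fin N → Finset (Fin N))
    (hC'cl : ∀ i, C' i ∈ cliques G) (hC'mem : ∀ i, i ∈ C' i)
    (hC'only : ∀ i : Fin N, ∀ C ∈ cliques G, C ≠ C' i → onlyVia g i (ψ C)) :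
    ∃ U : Finset (Fin N) → (∀ i, 𝒴 i) → ℝ,
      (∀ (i : Fin N) (x : ∀ j, 𝒳 j),
        U (C' i) (gmap g x)
          = ∑ z : ∀ j, 𝒳 j,
              if (∀ j, C' j = C' i → g j (z j) = g j (x j))
                  ∧ (∀ j, C' j ≠ C' i → z j = x j)
              then ψ (C' i) z else 0)
      ∧ (∀ C ∈ cliques G, C ∉ Set.range C' →
          ∀ x : ∀ j, 𝒳 j, U C (gmap g x) = ψ C x)
      ∧ (∀ y : ∀ i, 𝒴 i,
          (∑ x' : ∀ i, 𝒳 i, ∏ C ∈ cliques G, ψ C x') * dist p (gmap g) y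
            = ∏ C ∈ cliques G, U C y) :=
  lumped_factorization_general G p hpos ψ hfac g hsurj C' hC'cl hC'only
end

section
/- Suppose X is a Markov random field on 𝒢 with strictly positive PMF p_X represented by clique potentials {ψ_C, C∈𝒞} such that every potential ψ_C is constant on each preimage g^{-1}(y), y∈𝒴. With V_1,…,V_L the classes of a map C′ assigning to each vertex i an arbitrary clique containing i (constant on each class), the PMF of Y satisfies Z·p_Y(y) = ∏_{C∈𝒞} U_C(y) where U_{C′(V_ℓ)}(g(x)) = |g_{V_ℓ}^{-1}(g_{V_ℓ}(x_{V_ℓ}))| · ψ_{C′(V_ℓ)}(x) for ℓ=1,…,L and U_C(g(x)) = ψ_C(x) for cliques C not in the image of C′; in particular Y is a Markov random field on 𝒢. -/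
open scoped Classical

/-!
Basic framework: tuples of finitely-valued random variables indexed by the
vertex set `Fin N`, joint PMFs as real-valued functions, pushforward
distributions, Shannon entropy, conditional entropy, marginals, and Markov
random fields on simple graphs.
-/

variable {N : ℕ}

/-!
Because every `ψ_C` factors through `g`, so does `x ↦ ∏_C ψ_C(x) = Z p_X(x)`; hence
`Z p_Y(y)` is that product times the number `∏_j |g_j⁻¹(y_j)|` of preimages of `y`. Handing
the factor `|g_j⁻¹(y_j)|` to the clique `C'(j) ∋ j` keeps every potential local to its clique.
The Markov property then follows from the factorization alone: splitting the product into
the cliques that contain `i` (a function of `y_i` and `y_{N_i}`) and the others (not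
depending on `y_i`) makes `Y_i` conditionally independent of the rest given `Y_{N_i}`.
-/

open Finset

section Locality

variable {𝒳 : Fin N → Type*}

theorem localTo.mono {C D : Finset (Fin N)} {f : (∀ i, 𝒳 i) → ℝ} (hCD : C ⊆ D)
    (hf : localTo C f) : localTo D f :=
  fun x x' h => hf x x' fun i hi => h i (hCD hi)

theorem localTo_const (C : Finset (Fin N)) (c : ℝ) : localTo C (fun _ : ∀ i, 𝒳 i => c) :=
  fun _ _ _ => rfl

theorem localTo.mul {C : Finset (Fin N)} {f f' : (∀ i, 𝒳 i) → ℝ} (hf : localTo C f)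
    (hf' : localTo C f') : localTo C (fun x => f x * f' x) :=
  fun x x' h => congrArg₂ (· * ·) (hf x x' h) (hf' x x' h)

theorem localTo_prod {ι : Type*} {C : Finset (Fin N)} (s : Finset ι)
    {f : ι → (∀ i, 𝒳 i) → ℝ} (hf : ∀ k ∈ s, localTo C (f k)) :
    localTo C (fun x => ∏ k ∈ s, f k x) :=
  fun x x' h => prod_congr rfl fun k hk => hf k hk x x' h

theorem subset_insert_nbr_of_mem_cliques {G : SimpleGraph (Fin N)} {C : Finset (Fin N)}
    (hC : C ∈ cliques G) {i : Fin N} (hi : i ∈ C) : C ⊆ insert i (nbr G i) := by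
  intro j hj
  rcases eq_or_ne i j with rfl | hij
  · exact mem_insert_self i _
  · have hcl : G.IsClique (C : Set (Fin N)) := by simpa [cliques] using hC
    exact mem_insert_of_mem (by simpa [nbr] using hcl hi hj hij)

end Locality

section Margin

variable {𝒴 : Fin N → Type*}

theorem forall_mem_insert_eq_update_iff {S : Finset (Fin N)} {i : Fin N} (hi : i ∉ S)
    (y y' : ∀ i, 𝒴 i) (t : 𝒴 i) :
    (∀ j ∈ insert i S, y' j = Function.update y i t j) ↔ y' i = t ∧ ∀ j ∈ S, y' j = y j := by
  simp only [forall_mem_insert, Function.update_self]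
  refine and_congr_right fun _ => forall₂_congr fun j hj => ?_
  rw [Function.update_of_ne (ne_of_mem_of_not_mem hj hi)]

variable [∀ i, Fintype (𝒴 i)]

theorem margin_eq_sum (q : (∀ i, 𝒴 i) → ℝ) (S : Finset (Fin N)) (y : ∀ i, 𝒴 i) :
    margin q S y = ∑ y', if ∀ j ∈ S, y' j = y j then q y' else 0 := by
  simp [margin, _root_.dist, restr, funext_iff]

theorem margin_univ (q : (∀ i, 𝒴 i) → ℝ) (y : ∀ i, 𝒴 i) : margin q univ y = q y := by
  simp [margin_eq_sum, ← funext_iff]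

theorem margin_eq_sum_update (q : (∀ i, 𝒴 i) → ℝ) {S : Finset (Fin N)} {i : Fin N}
    (hi : i ∉ S) (y : ∀ i, 𝒴 i) :
    margin q S y = ∑ t, margin q (insert i S) (Function.update y i t) := by
  simp only [margin_eq_sum, forall_mem_insert_eq_update_iff hi, ite_and]
  rw [sum_comm]
  exact sum_congr rfl fun y' _ => by simp

theorem margin_mul_of_localTo {S : Finset (Fin N)} {a : (∀ i, 𝒴 i) → ℝ} (ha : localTo S a)
    (b : (∀ i, 𝒴 i) → ℝ) (y : ∀ i, 𝒴 i) :
    margin (fun y => a y * b y) S y = a y * margin b S y := by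
  simp only [margin_eq_sum, mul_sum, mul_ite, mul_zero]
  exact sum_congr rfl fun y' _ => by split_ifs with h; rw [ha y' y h]; rfl

theorem margin_insert_update_of_localTo {S : Finset (Fin N)} {i : Fin N} (hi : i ∉ S)
    {b : (∀ i, 𝒴 i) → ℝ} (hb : localTo (univ.erase i) b) (y : ∀ i, 𝒴 i) (t : 𝒴 i) :
    margin b (insert i S) (Function.update y i t) = margin b (insert i S) y := by
  conv_rhs => rw [← Function.update_eq_self i y]
  simp only [margin_eq_sum, forall_mem_insert_eq_update_iff hi, ← sum_filter]
  refine sum_nbij' (fun y' => Function.update y' i (y i)) (fun y' => Function.update y' i t)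
    ?_ ?_ ?_ ?_ ?_ <;> intro y' hy' <;> simp only [mem_filter, mem_univ, true_and] at hy' ⊢
  · exact ⟨Function.update_self .., fun j hj => by
      rw [Function.update_of_ne (ne_of_mem_of_not_mem hj hi), hy'.2 j hj]⟩
  · exact ⟨Function.update_self .., fun j hj => by
      rw [Function.update_of_ne (ne_of_mem_of_not_mem hj hi), hy'.2 j hj]⟩
  · rw [Function.update_idem, ← hy'.1, Function.update_eq_self]
  · rw [Function.update_idem, ← hy'.1, Function.update_eq_self]
  · exact hb _ _ fun j hj => (Function.update_of_ne (ne_of_mem_erase hj) _ _).symm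

/-- If `q = a * b` with `a` depending only on `y_i, y_S` and `b` not depending on `y_i`,
then `Y_i` is conditionally independent of the remaining coordinates given `Y_S`. -/
theorem mul_margin_eq_of_localTo {S : Finset (Fin N)} {i : Fin N} (hi : i ∉ S)
    {a b : (∀ i, 𝒴 i) → ℝ} (ha : localTo (insert i S) a) (hb : localTo (univ.erase i) b)
    (y : ∀ i, 𝒴 i) :
    a y * b y * margin (fun y => a y * b y) S y
      = margin (fun y => a y * b y) (univ.erase i) y
        * margin (fun y => a y * b y) (insert i S) y := by
  have hb_update : ∀ t, b (Function.update y i t) = b y := fun t =>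
    hb _ _ fun j hj => Function.update_of_ne (ne_of_mem_erase hj) _ _
  have hS := margin_eq_sum_update (fun y => a y * b y) hi y
  have hrest := margin_eq_sum_update (fun y => a y * b y) (notMem_erase i univ) y
  simp only [insert_erase (mem_univ i), margin_univ, hb_update] at hrest
  simp only [margin_mul_of_localTo ha, margin_insert_update_of_localTo hi hb] at hS
  rw [hS, hrest, margin_mul_of_localTo ha, mul_sum, sum_mul]
  exact sum_congr rfl fun t _ => by ring

theorem isMRF_of_factorization (G : SimpleGraph (Fin N)) (q : (∀ i, 𝒴 i) → ℝ) (K : ℝ)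
    (U : Finset (Fin N) → (∀ i, 𝒴 i) → ℝ) (hU : ∀ C ∈ cliques G, localTo C (U C))
    (hq : ∀ y, q y = K * ∏ C ∈ cliques G, U C y) : IsMRF G q := by
  intro i y
  have hq' : q = fun y => (K * ∏ C ∈ (cliques G).filter (i ∈ ·), U C y)
      * ∏ C ∈ (cliques G).filter (i ∉ ·), U C y := by
    funext y
    rw [hq, mul_assoc, prod_filter_mul_prod_filter_not]
  have ha : localTo (insert i (nbr G i)) fun y => K * ∏ C ∈ (cliques G).filter (i ∈ ·), U C y :=
    (localTo_const _ K).mul <| localTo_prod _ fun C hC =>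
      (hU C (mem_filter.1 hC).1).mono
        (subset_insert_nbr_of_mem_cliques (mem_filter.1 hC).1 (mem_filter.1 hC).2)
  have hb : localTo (univ.erase i) fun y => ∏ C ∈ (cliques G).filter (i ∉ ·), U C y :=
    localTo_prod _ fun C hC =>
      (hU C (mem_filter.1 hC).1).mono (subset_erase.2 ⟨subset_univ C, (mem_filter.1 hC).2⟩)
  rw [hq']
  exact mul_margin_eq_of_localTo (by simp [nbr]) ha hb y

end Margin

section Lumping

variable {𝒳 𝒴 : Fin N → Type*}

theorem gmap_gmap_of_rightInverse {g : ∀ i, 𝒳 i → 𝒴 i} {s : ∀ i, 𝒴 i → 𝒳 i}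
    (hs : ∀ i, Function.RightInverse (s i) (g i)) (y : ∀ i, 𝒴 i) : gmap g (gmap s y) = y :=
  funext fun i => hs i (y i)

variable [∀ i, Fintype (𝒳 i)]

theorem dist_const_mul {β : Type*} (c : ℝ) (p : (∀ i, 𝒳 i) → ℝ) (f : (∀ i, 𝒳 i) → β) (b : β) :
    dist (fun x => c * p x) f b = c * dist p f b := by
  simp only [_root_.dist, mul_sum, mul_ite, mul_zero]

theorem dist_comp_eq_card_mul {β : Type*} (F : β → ℝ) (f : (∀ i, 𝒳 i) → β) (b : β) :
    dist (fun x => F (f x)) f b = #{x | f x = b} * F b := by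
  rw [_root_.dist, ← sum_filter, sum_congr rfl fun x hx => by rw [(mem_filter.1 hx).2],
    sum_const, nsmul_eq_mul]

noncomputable def fiberCard (g : ∀ i, 𝒳 i → 𝒴 i) (j : Fin N) (y : 𝒴 j) : ℕ :=
  #{x | g j x = y}

theorem card_filter_gmap_eq (g : ∀ i, 𝒳 i → 𝒴 i) (y : ∀ i, 𝒴 i)
    [DecidablePred fun x : ∀ i, 𝒳 i => gmap g x = y] :
    #{x | gmap g x = y} = ∏ j, fiberCard g j (y j) := by
  have hpi : ({x | gmap g x = y} : Finset (∀ i, 𝒳 i))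
      = Fintype.piFinset fun j => ({xj | g j xj = y j} : Finset (𝒳 j)) := by
    ext x
    simp [gmap, funext_iff, Fintype.mem_piFinset]
  rw [hpi, Fintype.card_piFinset]
  rfl

theorem card_filter_gmap_agree (g : ∀ i, 𝒳 i → 𝒴 i) (P : Fin N → Prop) [DecidablePred P]
    (x : ∀ i, 𝒳 i) :
    #{z : ∀ i, 𝒳 i | (∀ j, P j → g j (z j) = g j (x j)) ∧ ∀ j, ¬P j → z j = x j}
      = ∏ j ∈ univ.filter P, fiberCard g j (g j (x j)) := by
  have hpi : ({z | (∀ j, P j → g j (z j) = g j (x j)) ∧ ∀ j, ¬P j → z j = x j}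
        : Finset (∀ i, 𝒳 i))
      = Fintype.piFinset fun j =>
          if P j then ({zj | g j zj = g j (x j)} : Finset (𝒳 j)) else {x j} := by
    ext z
    simp only [mem_filter, mem_univ, true_and, Fintype.mem_piFinset, ← forall_and]
    exact forall_congr' fun j => by split_ifs with hj <;> simp [hj]
  rw [hpi, Fintype.card_piFinset, prod_filter]
  exact prod_congr rfl fun j _ => by split_ifs <;> simp [fiberCard]

/-- The potentials of `Y`: the fibre sizes `|g_j⁻¹(y_j)|` of the vertices with `C' j = C` are
absorbed into `U_C` (an empty product when `C ∉ range C'`), and `ψ_C` is read off through a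
section `s` of `g`. -/
noncomputable def lumpedPotential (g : ∀ i, 𝒳 i → 𝒴 i) (s : ∀ i, 𝒴 i → 𝒳 i)
    (ψ : Finset (Fin N) → (∀ i, 𝒳 i) → ℝ) (C' : Fin N → Finset (Fin N)) (C : Finset (Fin N))
    (y : ∀ i, 𝒴 i) : ℝ :=
  (∏ j ∈ univ.filter (C' · = C), (fiberCard g j (y j) : ℝ)) * ψ C (gmap s y)

variable {g : ∀ i, 𝒳 i → 𝒴 i} {s : ∀ i, 𝒴 i → 𝒳 i} {ψ : Finset (Fin N) → (∀ i, 𝒳 i) → ℝ}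
  {C' : Fin N → Finset (Fin N)}

theorem lumpedPotential_gmap (hs : ∀ i, Function.RightInverse (s i) (g i)) {C : Finset (Fin N)}
    (hψ : ∀ x x', gmap g x = gmap g x' → ψ C x = ψ C x') (x : ∀ i, 𝒳 i) :
    lumpedPotential g s ψ C' C (gmap g x)
      = (∏ j ∈ univ.filter (C' · = C), (fiberCard g j (g j (x j)) : ℝ)) * ψ C x := by
  rw [lumpedPotential, hψ _ x (gmap_gmap_of_rightInverse hs _)]
  rfl

theorem localTo_lumpedPotential (hC' : ∀ j, j ∈ C' j) {C : Finset (Fin N)}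
    (hψ : localTo C (ψ C)) : localTo C (lumpedPotential g s ψ C' C) :=
  (localTo_prod _ fun j hj y y' h => by rw [h j ((mem_filter.1 hj).2 ▸ hC' j)]).mul
    fun y y' h => hψ _ _ fun j hj => by simp only [gmap, h j hj]

theorem prod_lumpedPotential {𝒞 : Finset (Finset (Fin N))} (hC' : ∀ j, C' j ∈ 𝒞)
    (y : ∀ i, 𝒴 i) :
    ∏ C ∈ 𝒞, lumpedPotential g s ψ C' C y
      = (∏ j, (fiberCard g j (y j) : ℝ)) * ∏ C ∈ 𝒞, ψ C (gmap s y) := by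
  simp only [lumpedPotential, prod_mul_distrib]
  rw [prod_fiberwise_of_maps_to fun j _ => hC' j]

theorem mul_dist_gmap_eq_prod_lumpedPotential {𝒞 : Finset (Finset (Fin N))} {p : (∀ i, 𝒳 i) → ℝ}
    {Z : ℝ} (hZ : ∀ x, Z * p x = ∏ C ∈ 𝒞, ψ C x)
    (hψ : ∀ C ∈ 𝒞, ∀ x x', gmap g x = gmap g x' → ψ C x = ψ C x')
    (hs : ∀ i, Function.RightInverse (s i) (g i)) (hC' : ∀ j, C' j ∈ 𝒞) (y : ∀ i, 𝒴 i) :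
    Z * dist p (gmap g) y = ∏ C ∈ 𝒞, lumpedPotential g s ψ C' C y := by
  have hZ' : (fun x => Z * p x) = fun x => ∏ C ∈ 𝒞, ψ C (gmap s (gmap g x)) := by
    funext x
    rw [hZ x]
    exact prod_congr rfl fun C hC => hψ C hC _ _ (gmap_gmap_of_rightInverse hs _).symm
  rw [← dist_const_mul, hZ', dist_comp_eq_card_mul (fun y => ∏ C ∈ 𝒞, ψ C (gmap s y)),
    card_filter_gmap_eq, Nat.cast_prod, prod_lumpedPotential hC']

end Lumping

theorem lumped_factorization_const_general {𝒳 𝒴 : Fin N → Type*}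
    [∀ i, Fintype (𝒳 i)] [∀ i, Fintype (𝒴 i)]
    (G : SimpleGraph (Fin N)) (p : (∀ i, 𝒳 i) → ℝ)
    (hsum : ∑ x : ∀ i, 𝒳 i, p x = 1)
    (ψ : Finset (Fin N) → (∀ i, 𝒳 i) → ℝ)
    (hloc : ∀ C ∈ cliques G, localTo C (ψ C))
    (hfac : ∀ x : ∀ i, 𝒳 i,
      p x = (∏ C ∈ cliques G, ψ C x) / ∑ x' : ∀ i, 𝒳 i, ∏ C ∈ cliques G, ψ C x')
    (g : ∀ i, 𝒳 i → 𝒴 i) (hsurj : ∀ i, Function.Surjective (g i))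
    (hconst : ∀ C ∈ cliques G, ∀ x x' : ∀ i, 𝒳 i,
      gmap g x = gmap g x' → ψ C x = ψ C x')
    (C' : Fin N → Finset (Fin N))
    (hC'cl : ∀ i, C' i ∈ cliques G) (hC'mem : ∀ i, i ∈ C' i) :
    (∃ U : Finset (Fin N) → (∀ i, 𝒴 i) → ℝ,
      (∀ (i : Fin N) (x : ∀ j, 𝒳 j),
        U (C' i) (gmap g x)
          = ((Finset.univ.filter (fun z : ∀ j, 𝒳 j =>
                (∀ j, C' j = C' i → g j (z j) = g j (x j))
                  ∧ (∀ j, C' j ≠ C' i → z j = x j))).card : ℝ) * ψ (C' i) x)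
      ∧ (∀ C ∈ cliques G, C ∉ Set.range C' →
          ∀ x : ∀ j, 𝒳 j, U C (gmap g x) = ψ C x)
      ∧ (∀ y : ∀ i, 𝒴 i,
          (∑ x' : ∀ i, 𝒳 i, ∏ C ∈ cliques G, ψ C x') * dist p (gmap g) y
            = ∏ C ∈ cliques G, U C y))
    ∧ IsMRF G (dist p (gmap g)) := by
  set Z := ∑ x' : ∀ i, 𝒳 i, ∏ C ∈ cliques G, ψ C x'
  have hZ : Z ≠ 0 := fun hZ => by simp [hfac, hZ] at hsum
  have hZp : ∀ x, Z * p x = ∏ C ∈ cliques G, ψ C x := fun x => by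
    rw [hfac x, mul_div_cancel₀ _ hZ]
  choose s hs using fun i => (hsurj i).hasRightInverse
  have hZU : ∀ y, Z * dist p (gmap g) y = ∏ C ∈ cliques G, lumpedPotential g s ψ C' C y :=
    mul_dist_gmap_eq_prod_lumpedPotential hZp hconst hs hC'cl
  refine ⟨⟨lumpedPotential g s ψ C', fun i x => ?_, fun C hC hCC' x => ?_, hZU⟩, ?_⟩
  · rw [lumpedPotential_gmap hs (hconst _ (hC'cl i)), card_filter_gmap_agree, Nat.cast_prod]
  · rw [lumpedPotential_gmap hs (hconst C hC), filter_eq_empty_iff.2 fun j _ hj => hCC' ⟨j, hj⟩,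
      prod_empty, one_mul]
  · refine isMRF_of_factorization G _ Z⁻¹ (lumpedPotential g s ψ C')
      (fun C hC => localTo_lumpedPotential hC'mem (hloc C hC)) fun y => ?_
    rw [← hZU, inv_mul_cancel_left₀ hZ]

/-- **Corollary.** If every clique potential `ψ_C` is constant on
each preimage `g⁻¹(y)`, then (with `C'` assigning to each vertex `i` an arbitrary
clique containing `i`) the PMF of `Y` satisfies `Z · p_Y(y) = ∏_{C ∈ 𝒞} U_C(y)`
with `U_{C'(V_ℓ)}(g(x)) = |g_{V_ℓ}⁻¹(g_{V_ℓ}(x_{V_ℓ}))| · ψ_{C'(V_ℓ)}(x)` and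
`U_C(g(x)) = ψ_C(x)` for cliques `C` not in the image of `C'`; in particular, `Y`
is a MRF on `𝒢`. -/
theorem lumped_factorization_const {𝒳 𝒴 : Fin N → Type*}
    [∀ i, Fintype (𝒳 i)] [∀ i, Fintype (𝒴 i)]
    (G : SimpleGraph (Fin N)) (p : (∀ i, 𝒳 i) → ℝ)
    (hpos : ∀ x, 0 < p x) (hsum : ∑ x : ∀ i, 𝒳 i, p x = 1)
    (ψ : Finset (Fin N) → (∀ i, 𝒳 i) → ℝ)
    (hloc : ∀ C ∈ cliques G, localTo C (ψ C))
    (hfac : ∀ x : ∀ i, 𝒳 i,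
      p x = (∏ C ∈ cliques G, ψ C x) / ∑ x' : ∀ i, 𝒳 i, ∏ C ∈ cliques G, ψ C x')
    (g : ∀ i, 𝒳 i → 𝒴 i) (hsurj : ∀ i, Function.Surjective (g i))
    (hconst : ∀ C ∈ cliques G, ∀ x x' : ∀ i, 𝒳 i,
      gmap g x = gmap g x' → ψ C x = ψ C x')
    (C' : Fin N → Finset (Fin N))
    (hC'cl : ∀ i, C' i ∈ cliques G) (hC'mem : ∀ i, i ∈ C' i) :
    (∃ U : Finset (Fin N) → (∀ i, 𝒴 i) → ℝ,
      (∀ (i : Fin N) (x : ∀ j, 𝒳 j),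
        U (C' i) (gmap g x)
          = ((Finset.univ.filter (fun z : ∀ j, 𝒳 j =>
                (∀ j, C' j = C' i → g j (z j) = g j (x j))
                  ∧ (∀ j, C' j ≠ C' i → z j = x j))).card : ℝ) * ψ (C' i) x)
      ∧ (∀ C ∈ cliques G, C ∉ Set.range C' →
          ∀ x : ∀ j, 𝒳 j, U C (gmap g x) = ψ C x)
      ∧ (∀ y : ∀ i, 𝒴 i,
          (∑ x' : ∀ i, 𝒳 i, ∏ C ∈ cliques G, ψ C x') * dist p (gmap g) y
            = ∏ C ∈ cliques G, U C y))
    ∧ IsMRF G (dist p (gmap g)) :=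
  lumped_factorization_const_general G p hsum ψ hloc hfac g hsurj hconst C' hC'cl hC'mem
end

section
/- Let 𝒢=(V,E) be a chordal graph and X a Markov random field on 𝒢 (with PMF p_X not necessarily strictly positive), and let Y_i=g_i(X_i). If there exist a permutation v_1,…,v_N of the vertices such that, with A_{v_i} := N_{v_i} ∩ {v_1,…,v_{i-1}}, one has H(X_{v_i} | Y_{v_i}, X_{A_{v_i}}) = 0 for every i∈{1,…,N}, and this permutation is the one along which H(X) decomposes as Σ_{i=1}^N H(X_{v_i}|X_{A_{v_i}}) (e.g., a maximum cardinality search ordering), then the lumping is information-preserving, i.e., H(Y)=H(X). -/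
open scoped Classical

/-!
Basic framework: tuples of finitely-valued random variables indexed by the
vertex set `Fin N`, joint PMFs as real-valued functions, pushforward
distributions, Shannon entropy, conditional entropy, marginals, and Markov
random fields on simple graphs.
-/

variable {N : ℕ}

/-- `G` is chordal: every induced cycle of `G` has length three, i.e. there is no
induced (embedded) cycle of length at least four. -/
def IsChordal {V : Type*} (G : SimpleGraph V) : Prop :=
  ∀ n : ℕ, 3 < n → IsEmpty (SimpleGraph.cycleGraph n ↪g G)

/-- Given a permutation `v` of the vertices, `A_{v_i} := N_{v_i} ∩ {v_1, …, v_{i-1}}`. -/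
noncomputable def Aset (G : SimpleGraph (Fin N)) (v : Equiv.Perm (Fin N)) (i : Fin N) :
    Finset (Fin N) :=
  nbr G (v i) ∩ (Finset.Iio i).image v

/-!
Each hypothesis `H(X_{v_i} | Y_{v_i}, X_{A_{v_i}}) = 0` says that on the support of `p` the value
`x_{v_i}` is a function of `y_{v_i}` and of `x_{A_{v_i}}`. Since `A_{v_i}` only contains vertices
earlier in the ordering, induction along `v` shows that `y = g(x)` determines `x` on the support
of `p`. Entropy is invariant under maps that are injective on the support, so `H(Y) = H(X)`.
-/

namespace Real

variable {ι : Type*} [Fintype ι]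

lemma sum_negMulLog_sub_negMulLog_sum (a : ι → ℝ) :
    ∑ i, negMulLog (a i) - negMulLog (∑ i, a i)
      = ∑ i, a i * (log (∑ j, a j) - log (a i)) := by
  have hsum : negMulLog (∑ i, a i) = ∑ i, -(a i * log (∑ j, a j)) := by
    rw [negMulLog, neg_mul, Finset.sum_mul, Finset.sum_neg_distrib]
  rw [hsum, ← Finset.sum_sub_distrib]
  exact Finset.sum_congr rfl fun i _ => by rw [negMulLog]; ring

lemma mul_log_sum_sub_log_nonneg {a : ι → ℝ} (ha : ∀ i, 0 ≤ a i) (i : ι) :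
    0 ≤ a i * (log (∑ j, a j) - log (a i)) := by
  rcases (ha i).eq_or_lt with h | h
  · simp [← h]
  · exact mul_nonneg h.le <| sub_nonneg.2 <|
      log_le_log h (Finset.single_le_sum (fun j _ => ha j) (Finset.mem_univ i))

lemma negMulLog_sum_le_sum_negMulLog {a : ι → ℝ} (ha : ∀ i, 0 ≤ a i) :
    negMulLog (∑ i, a i) ≤ ∑ i, negMulLog (a i) := by
  have := Finset.sum_nonneg fun i (_ : i ∈ Finset.univ) => mul_log_sum_sub_log_nonneg ha i
  linarith [sum_negMulLog_sub_negMulLog_sum a]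

lemma eq_of_sum_negMulLog_eq_negMulLog_sum {a : ι → ℝ} (ha : ∀ i, 0 ≤ a i)
    (heq : ∑ i, negMulLog (a i) = negMulLog (∑ i, a i)) {i j : ι}
    (hi : 0 < a i) (hj : 0 < a j) : i = j := by
  by_contra hij
  have hpair : a i + a j ≤ ∑ k, a k := by
    rw [← Finset.sum_pair hij]
    exact Finset.sum_le_sum_of_subset_of_nonneg (Finset.subset_univ _) fun k _ _ => ha k
  have hterm : 0 < a i * (log (∑ k, a k) - log (a i)) :=
    mul_pos hi <| sub_pos.2 <| log_lt_log hi (by linarith)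
  have hpos := Finset.sum_pos' (fun k (_ : k ∈ Finset.univ) => mul_log_sum_sub_log_nonneg ha k)
    ⟨i, Finset.mem_univ i, hterm⟩
  linarith [sum_negMulLog_sub_negMulLog_sum a]

lemma negMulLog_sum_of_support_subsingleton {a : ι → ℝ}
    (ha : (Function.support a).Subsingleton) :
    negMulLog (∑ i, a i) = ∑ i, negMulLog (a i) := by
  by_cases h : ∃ i, a i ≠ 0
  · obtain ⟨i, hi⟩ := h
    have hzero : ∀ j, j ≠ i → a j = 0 := fun j hji => by
      by_contra hj
      exact hji (ha hj hi)
    rw [Fintype.sum_eq_single i hzero, Fintype.sum_eq_single i fun j hj => by simp [hzero j hj]]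
  · simp only [ne_eq, not_exists, not_not] at h
    simp [h]

end Real

section Entropy

variable {𝒳 : Fin N → Type*} [∀ i, Fintype (𝒳 i)] {β γ : Type*} (p : (∀ i, 𝒳 i) → ℝ)

lemma dist_nonneg_of_nonneg (hp : ∀ x, 0 ≤ p x) (f : (∀ i, 𝒳 i) → β) (b : β) :
    0 ≤ dist p f b :=
  Finset.sum_nonneg fun x _ => by split_ifs <;> simp [hp x]

lemma dist_pos_of_pos (hp : ∀ x, 0 ≤ p x) (f : (∀ i, 𝒳 i) → β) {x : ∀ i, 𝒳 i}
    (hx : 0 < p x) : 0 < dist p f (f x) :=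
  lt_of_lt_of_le (by simpa using hx) <|
    Finset.single_le_sum (fun y _ => by split_ifs <;> simp [hp y]) (Finset.mem_univ x)

lemma dist_eq_sum_dist_prod [Fintype β] (f : (∀ i, 𝒳 i) → β) (h : (∀ i, 𝒳 i) → γ) (c : γ) :
    dist p h c = ∑ b, dist p (fun x => (f x, h x)) (b, c) := by
  simp only [_root_.dist, Prod.mk.injEq]
  rw [Finset.sum_comm]
  refine Finset.sum_congr rfl fun x _ => ?_
  by_cases hx : h x = c <;> simp [hx]

lemma condEnt_eq_sum [Fintype β] [Fintype γ] (f : (∀ i, 𝒳 i) → β) (h : (∀ i, 𝒳 i) → γ) :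
    condEnt p f h = ∑ c, (∑ b, Real.negMulLog (dist p (fun x => (f x, h x)) (b, c))
      - Real.negMulLog (∑ b, dist p (fun x => (f x, h x)) (b, c))) := by
  simp only [condEnt, ent, Finset.sum_sub_distrib, ← dist_eq_sum_dist_prod p f h,
    Fintype.sum_prod_type_right]

lemma eq_of_condEnt_eq_zero [Fintype β] [Fintype γ] (hp : ∀ x, 0 ≤ p x)
    {f : (∀ i, 𝒳 i) → β} {h : (∀ i, 𝒳 i) → γ} (hf : condEnt p f h = 0)
    {x x' : ∀ i, 𝒳 i} (hx : x ∈ Function.support p) (hx' : x' ∈ Function.support p)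
    (hh : h x = h x') : f x = f x' := by
  set q := dist p (fun x => (f x, h x))
  have hq : ∀ bc, 0 ≤ q bc := dist_nonneg_of_nonneg p hp _
  have hnonneg : ∀ c ∈ Finset.univ,
      0 ≤ ∑ b, Real.negMulLog (q (b, c)) - Real.negMulLog (∑ b, q (b, c)) := fun c _ =>
    sub_nonneg.2 (Real.negMulLog_sum_le_sum_negMulLog fun b => hq (b, c))
  rw [condEnt_eq_sum] at hf
  have hfiber : ∀ c, ∑ b, Real.negMulLog (q (b, c)) = Real.negMulLog (∑ b, q (b, c)) := fun c =>
    sub_eq_zero.1 <| (Finset.sum_eq_zero_iff_of_nonneg hnonneg).1 hf c (Finset.mem_univ c)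
  have hpos : ∀ {y}, y ∈ Function.support p → 0 < q (f y, h y) := fun hy =>
    dist_pos_of_pos p hp _ ((hp _).lt_of_ne' hy)
  have h' : 0 < q (f x', h x) := hh ▸ hpos hx'
  exact Real.eq_of_sum_negMulLog_eq_negMulLog_sum (fun b => hq (b, h x)) (hfiber (h x))
    (hpos hx) h'

lemma negMulLog_dist_eq_sum {f : (∀ i, 𝒳 i) → β} (hf : Set.InjOn f (Function.support p))
    (b : β) : Real.negMulLog (dist p f b)
      = ∑ x, if f x = b then Real.negMulLog (p x) else 0 := by
  have hsupp : (Function.support fun x => if f x = b then p x else 0).Subsingleton := by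
    intro x hx y hy
    simp only [Function.mem_support, ne_eq, ite_eq_right_iff, not_forall] at hx hy
    exact hf hx.2 hy.2 (hx.1.trans hy.1.symm)
  rw [_root_.dist, Real.negMulLog_sum_of_support_subsingleton hsupp]
  exact Finset.sum_congr rfl fun x _ => by split_ifs <;> simp

lemma ent_eq_sum_negMulLog_of_injOn [Fintype β] {f : (∀ i, 𝒳 i) → β}
    (hf : Set.InjOn f (Function.support p)) :
    ent p f = ∑ x, Real.negMulLog (p x) := by
  simp only [ent, negMulLog_dist_eq_sum p hf]
  rw [Finset.sum_comm]
  simp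

end Entropy

lemma injOn_gmap_of_condEnt_eq_zero {𝒳 𝒴 : Fin N → Type*} [∀ i, Fintype (𝒳 i)]
    [∀ i, Fintype (𝒴 i)] {p : (∀ i, 𝒳 i) → ℝ} (hp : ∀ x, 0 ≤ p x) {g : ∀ i, 𝒳 i → 𝒴 i}
    {v : Equiv.Perm (Fin N)} {A : Fin N → Finset (Fin N)}
    (hA : ∀ i, A i ⊆ (Finset.Iio i).image v)
    (hzero : ∀ i,
      condEnt p (fun x => x (v i)) (fun x => (g (v i) (x (v i)), restr (A i) x)) = 0) :
    Set.InjOn (gmap g) (Function.support p) := by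
  intro x hx x' hx' hg
  have hstep : ∀ i, x (v i) = x' (v i) := by
    intro i
    induction i using WellFoundedLT.induction with
    | _ i ih =>
      refine eq_of_condEnt_eq_zero p hp (hzero i) hx hx'
        (Prod.ext (congrFun hg (v i)) (funext fun ⟨j, hj⟩ => ?_))
      obtain ⟨k, hk, rfl⟩ := Finset.mem_image.1 (hA i hj)
      exact ih k (Finset.mem_Iio.1 hk)
  funext j
  obtain ⟨i, rfl⟩ := v.surjective j
  exact hstep i

theorem sufficient_infoPreservation_chordal_general {𝒳 𝒴 : Fin N → Type*}
    [∀ i, Fintype (𝒳 i)] [∀ i, Fintype (𝒴 i)]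
    (G : SimpleGraph (Fin N))
    (p : (∀ i, 𝒳 i) → ℝ)
    (hnn : ∀ x, 0 ≤ p x)
    (g : ∀ i, 𝒳 i → 𝒴 i)
    (v : Equiv.Perm (Fin N))
    (hzero : ∀ i : Fin N,
      condEnt p (fun x => x (v i))
        (fun x => (g (v i) (x (v i)), restr (Aset G v i) x)) = 0) :
    ent p (gmap g) = ent p id := by
  have hinj : Set.InjOn (gmap g) (Function.support p) :=
    injOn_gmap_of_condEnt_eq_zero hnn (fun _ => Finset.inter_subset_right) hzero
  rw [ent_eq_sum_negMulLog_of_injOn p hinj, ent_eq_sum_negMulLog_of_injOn p (Set.injOn_id _)]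

/-- **Proposition 4, sufficiency for chordal graphs.** Let `𝒢` be
chordal, `X` a MRF on `𝒢`, and `Y_i = g_i(X_i)`. If there is a vertex permutation
`v_1, …, v_N` along which the entropy decomposes as
`H(X) = Σ_i H(X_{v_i} | X_{A_{v_i}})` with `A_{v_i} = N_{v_i} ∩ {v_1,…,v_{i-1}}`
(e.g. a maximum cardinality search ordering), and
`H(X_{v_i} | Y_{v_i}, X_{A_{v_i}}) = 0` for every `i`, then the lumping is
information-preserving: `H(Y) = H(X)`. -/
theorem sufficient_infoPreservation_chordal {𝒳 𝒴 : Fin N → Type*}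
    [∀ i, Fintype (𝒳 i)] [∀ i, Fintype (𝒴 i)]
    (G : SimpleGraph (Fin N)) (hchordal : IsChordal G)
    (p : (∀ i, 𝒳 i) → ℝ)
    (hnn : ∀ x, 0 ≤ p x) (hsum : ∑ x : ∀ i, 𝒳 i, p x = 1)
    (hMRF : IsMRF G p)
    (g : ∀ i, 𝒳 i → 𝒴 i)
    (v : Equiv.Perm (Fin N))
    (hdecomp : ent p id
      = ∑ i : Fin N, condEnt p (fun x => x (v i)) (restr (Aset G v i)))
    (hzero : ∀ i : Fin N,
      condEnt p (fun x => x (v i))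
        (fun x => (g (v i) (x (v i)), restr (Aset G v i) x)) = 0) :
    ent p (gmap g) = ent p id :=
  sufficient_infoPreservation_chordal_general G p hnn g v hzero
end
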